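/- For every integer r ≥ 1 and every integer n ≥ 1, the element aⁿbⁿ of G lies in the submonoid of G generated by the three elements ab, c₁, c₂; that is, aⁿbⁿ can be written as a positive word in the alphabet {ab, c₁, c₂}. -/
import Mathlib


/-- The "progression word" `x y^(s+1) x y^(s+2) ⋯ x y^(s+r)` in a group. -/
def wordProg {G : Type*} [Group G] (x y : G) (s r : ℕ) : G :=
  ((List.range r).map (fun k => x * y ^ (s + k + 1))).prod

/-- Generators of `G`: `0 = a`, `1 = b`, `2 = c₁`, `3 = c₂`, `4 = d₁`, `5 = d₂`.
The relators are `a⁻¹b⁻¹ab C⁻¹`, `b⁻¹cᵢb Cᵢ⁻¹`, `(ab)⁻¹d_j(ab) D_j⁻¹`, and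
`cᵢ⁻¹d_jcᵢ D_{ij}⁻¹` for `1 ≤ i,j ≤ 2`, where `C = (c₁c₂)(c₁c₂²)⋯(c₁c₂^r)`,
`Cᵢ = (c₁c₂^{ri+1})⋯(c₁c₂^{ri+r})`, `D_j = (d₁d₂^{rj+1})⋯(d₁d₂^{rj+r})`, and
`D_{ij} = (d₁d₂^{r(2i+j)+1})⋯(d₁d₂^{r(2i+j)+r})`. -/
def GRels (r : ℕ) : Set (FreeGroup (Fin 6)) :=
  { w | (w = (FreeGroup.of (0 : Fin 6))⁻¹ * (FreeGroup.of (1 : Fin 6))⁻¹ *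
            FreeGroup.of (0 : Fin 6) * FreeGroup.of (1 : Fin 6) *
            (wordProg (FreeGroup.of (2 : Fin 6)) (FreeGroup.of (3 : Fin 6)) 0 r)⁻¹) ∨
        (∃ i : Fin 2,
          w = (FreeGroup.of (1 : Fin 6))⁻¹ *
              FreeGroup.of (⟨i.val + 2, by omega⟩ : Fin 6) *
              FreeGroup.of (1 : Fin 6) *
              (wordProg (FreeGroup.of (2 : Fin 6)) (FreeGroup.of (3 : Fin 6))
                (r * (i.val + 1)) r)⁻¹) ∨
        (∃ j : Fin 2,
          w = (FreeGroup.of (0 : Fin 6) * FreeGroup.of (1 : Fin 6))⁻¹ *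
              FreeGroup.of (⟨j.val + 4, by omega⟩ : Fin 6) *
              (FreeGroup.of (0 : Fin 6) * FreeGroup.of (1 : Fin 6)) *
              (wordProg (FreeGroup.of (4 : Fin 6)) (FreeGroup.of (5 : Fin 6))
                (r * (j.val + 1)) r)⁻¹) ∨
        (∃ i j : Fin 2,
          w = (FreeGroup.of (⟨i.val + 2, by omega⟩ : Fin 6))⁻¹ *
              FreeGroup.of (⟨j.val + 4, by omega⟩ : Fin 6) *
              FreeGroup.of (⟨i.val + 2, by omega⟩ : Fin 6) *
              (wordProg (FreeGroup.of (4 : Fin 6)) (FreeGroup.of (5 : Fin 6))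
                (r * (2 * (i.val + 1) + (j.val + 1))) r)⁻¹) }

/-- `G = ⟨a,b,c₁,c₂,d₁,d₂ ∣ a⁻¹b⁻¹ab = C, b⁻¹cᵢb = Cᵢ, (ab)⁻¹d_j(ab) = D_j,
cᵢ⁻¹d_jcᵢ = D_{ij}, 1 ≤ i,j ≤ 2⟩`. -/
abbrev GG (r : ℕ) := PresentedGroup (GRels r)

section AnBnAux

lemma rel_eq_one {r : ℕ} {w : FreeGroup (Fin 6)} (hw : w ∈ GRels r) :
    PresentedGroup.mk (GRels r) w = 1 :=
  (QuotientGroup.eq_one_iff w).mpr (Subgroup.subset_normalClosure hw)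

lemma map_wordProg {M N : Type*} [Group M] [Group N] (f : M →* N) (x y : M) (s r : ℕ) :
    f (wordProg x y s r) = wordProg (f x) (f y) s r := by
  unfold wordProg
  rw [map_list_prod]
  simp [List.map_map, Function.comp_def]

lemma wordProg_mem {G : Type*} [Group G] {x y : G} {S : Set G} (hx : x ∈ S) (hy : y ∈ S)
    (s r : ℕ) : wordProg x y s r ∈ Submonoid.closure S := by
  unfold wordProg
  refine list_prod_mem fun z hz => ?_
  simp only [List.mem_map] at hz
  obtain ⟨k, -, rfl⟩ := hz
  exact mul_mem (Submonoid.subset_closure hx) (pow_mem (Submonoid.subset_closure hy) _)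

variable (r : ℕ)

local notation "a" => (PresentedGroup.of (0 : Fin 6) : GG r)
local notation "b" => (PresentedGroup.of (1 : Fin 6) : GG r)
local notation "c₁" => (PresentedGroup.of (2 : Fin 6) : GG r)
local notation "c₂" => (PresentedGroup.of (3 : Fin 6) : GG r)
local notation "MM" => Submonoid.closure ({a * b, c₁, c₂} : Set (GG r))

lemma rel1 : b⁻¹ * a * b = a * wordProg c₁ c₂ 0 r := by
  have hw : ((FreeGroup.of (0 : Fin 6))⁻¹ * (FreeGroup.of (1 : Fin 6))⁻¹ *
      FreeGroup.of (0 : Fin 6) * FreeGroup.of (1 : Fin 6) *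
      (wordProg (FreeGroup.of (2 : Fin 6)) (FreeGroup.of (3 : Fin 6)) 0 r)⁻¹) ∈ GRels r :=
    Or.inl rfl
  have h := rel_eq_one hw
  simp only [map_mul, map_inv, map_wordProg] at h
  rw [mul_inv_eq_one] at h
  calc b⁻¹ * a * b = a * (a⁻¹ * b⁻¹ * a * b) := by group
    _ = a * wordProg c₁ c₂ 0 r := by
        rw [show a⁻¹ * b⁻¹ * a * b = wordProg c₁ c₂ 0 r from h]

lemma rel2 (i : Fin 2) :
    b⁻¹ * (PresentedGroup.of (⟨i.val + 2, by omega⟩ : Fin 6) : GG r) * b =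
      wordProg c₁ c₂ (r * (i.val + 1)) r := by
  have hw : ((FreeGroup.of (1 : Fin 6))⁻¹ *
      FreeGroup.of (⟨i.val + 2, by omega⟩ : Fin 6) * FreeGroup.of (1 : Fin 6) *
      (wordProg (FreeGroup.of (2 : Fin 6)) (FreeGroup.of (3 : Fin 6)) (r * (i.val + 1)) r)⁻¹)
      ∈ GRels r := Or.inr (Or.inl ⟨i, rfl⟩)
  have h := rel_eq_one hw
  simp only [map_mul, map_inv, map_wordProg] at h
  rw [mul_inv_eq_one] at h
  exact h

lemma conj_c_mem : ∀ x ∈ Submonoid.closure ({c₁, c₂} : Set (GG r)), b⁻¹ * x * b ∈ MM := by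
  intro x hx
  induction hx using Submonoid.closure_induction with
  | mem x hx =>
    rcases hx with rfl | rfl
    · have h0 : b⁻¹ * c₁ * b = wordProg c₁ c₂ (r * (0 + 1)) r := rel2 r 0
      rw [h0]
      exact wordProg_mem (by simp) (by simp) _ _
    · have h1 : b⁻¹ * c₂ * b = wordProg c₁ c₂ (r * (1 + 1)) r := rel2 r 1
      rw [h1]
      exact wordProg_mem (by simp) (by simp) _ _
  | one => simpa using one_mem MM
  | mul x y _ _ hx hy =>
    have h : b⁻¹ * (x * y) * b = (b⁻¹ * x * b) * (b⁻¹ * y * b) := by group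
    rw [h]; exact mul_mem hx hy

lemma conj_mem : ∀ x ∈ MM, b⁻¹ * x * b ∈ MM := by
  intro x hx
  induction hx using Submonoid.closure_induction with
  | mem x hx =>
    rcases hx with rfl | rfl | rfl
    · have h : b⁻¹ * (a * b) * b = (b⁻¹ * a * b) * b := by group
      rw [h, rel1]
      have h2 : a * wordProg c₁ c₂ 0 r * b = (a * b) * (b⁻¹ * wordProg c₁ c₂ 0 r * b) := by
        group
      rw [h2]
      exact mul_mem (Submonoid.subset_closure (by simp))
        (conj_c_mem r _ (wordProg_mem (by simp) (by simp) _ _))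
    · have h0 : b⁻¹ * c₁ * b = wordProg c₁ c₂ (r * (0 + 1)) r := rel2 r 0
      rw [h0]
      exact wordProg_mem (by simp) (by simp) _ _
    · have h1 : b⁻¹ * c₂ * b = wordProg c₁ c₂ (r * (1 + 1)) r := rel2 r 1
      rw [h1]
      exact wordProg_mem (by simp) (by simp) _ _
  | one => simpa using one_mem MM
  | mul x y _ _ hx hy =>
    have h : b⁻¹ * (x * y) * b = (b⁻¹ * x * b) * (b⁻¹ * y * b) := by group
    rw [h]; exact mul_mem hx hy

end AnBnAux

/-- For every `r ≥ 1` and `n ≥ 1`, the element `aⁿbⁿ` of `G` lies in the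
submonoid of `G` generated by `ab`, `c₁`, `c₂`; i.e. `aⁿbⁿ` is a positive word
in the alphabet `{ab, c₁, c₂}`. -/
theorem an_bn_positive_word (r : ℕ) (hr : 1 ≤ r) (n : ℕ) (hn : 1 ≤ n) :
    (PresentedGroup.of (0 : Fin 6) : GG r) ^ n * PresentedGroup.of (1 : Fin 6) ^ n ∈
      Submonoid.closure
        ({(PresentedGroup.of (0 : Fin 6) : GG r) * PresentedGroup.of (1 : Fin 6),
          PresentedGroup.of (2 : Fin 6), PresentedGroup.of (3 : Fin 6)} :
          Set (GG r)) := by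
  induction n, hn using Nat.le_induction with
  | base => simpa using Submonoid.subset_closure (Set.mem_insert _ _)
  | succ n hn ih =>
    have key : (PresentedGroup.of (0 : Fin 6) : GG r) ^ (n + 1) *
        PresentedGroup.of (1 : Fin 6) ^ (n + 1) =
        (PresentedGroup.of (0 : Fin 6) * PresentedGroup.of (1 : Fin 6)) *
          ((PresentedGroup.of (1 : Fin 6) : GG r)⁻¹ *
            (PresentedGroup.of (0 : Fin 6) ^ n * PresentedGroup.of (1 : Fin 6) ^ n) *
            PresentedGroup.of (1 : Fin 6)) := by
      rw [pow_succ', pow_succ]; group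
    rw [key]
    exact mul_mem (Submonoid.subset_closure (Set.mem_insert _ _)) (conj_mem r _ ih)
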